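/- Let (fₙ) be a sequence of orientation-preserving C¹ diffeomorphisms of [0,1] with absolutely continuous derivatives, and f₀ likewise, such that fₙ → f₀, fₙ' → f₀' uniformly and fₙ'' → f₀'' in L¹([0,1]). Then [(fₙ')⁻¹ · fₙ''] ∘ fₙ⁻¹ → [(f₀')⁻¹ · f₀''] ∘ f₀⁻¹ in L¹([0,1]). -/

import Mathlib

open MeasureTheory Set Filter Topology intervalIntegral

/-- An orientation-preserving `C¹` diffeomorphism of `[0,1]`. -/
def IsDiffeo1 (u : ℝ → ℝ) : Prop :=
  ContDiffOn ℝ 1 u (Icc 0 1) ∧ u 0 = 0 ∧ u 1 = 1 ∧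
    ∀ x ∈ Icc (0:ℝ) 1, 0 < derivWithin u (Icc 0 1) x

/-!
Write `hₙ = fₙ''/fₙ'`. By the triangle inequality it suffices that
`∫ |hₙ ∘ fₙ⁻¹ - h₀ ∘ fₙ⁻¹| → 0` and `∫ |h₀ ∘ fₙ⁻¹ - h₀ ∘ f₀⁻¹| → 0`. Substituting `y = fₙ⁻¹ x`,
the first integral becomes `∫ |fₙ'' - fₙ' h₀| ≤ ∫ |fₙ'' - f₀''| + ‖fₙ' - f₀'‖_∞ ∫ |h₀|`.
For the second, `fₙ⁻¹ → f₀⁻¹` uniformly since `f₀' ≥ δ > 0`, and composing with `fₙ⁻¹`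
multiplies `L¹` norms by at most `sup fₙ'`, which is bounded uniformly in `n`; so one may
replace `h₀` by a uniformly continuous function `g` close to it in `L¹`, for which
`g ∘ fₙ⁻¹ → g ∘ f₀⁻¹` uniformly.
-/

theorem tendsto_nhds_zero_of_forall_eventually_le_mul {ι : Type*} {l : Filter ι} {a : ι → ℝ}
    (C : ℝ) (ha : ∀ i, 0 ≤ a i) (h : ∀ ε > 0, ∀ᶠ i in l, a i ≤ C * ε) :
    Tendsto a l (𝓝 0) := by
  refine tendsto_order.2 ⟨fun b hb => .of_forall fun i => hb.trans_le (ha i), fun b hb => ?_⟩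
  have hC : 0 < |C| + 1 := by positivity
  refine (h (b / (|C| + 1)) (div_pos hb hC)).mono fun i hi => hi.trans_lt ?_
  calc C * (b / (|C| + 1)) ≤ |C| * (b / (|C| + 1)) :=
        mul_le_mul_of_nonneg_right (le_abs_self C) (div_pos hb hC).le
    _ < (|C| + 1) * (b / (|C| + 1)) := by gcongr; linarith
    _ = b := mul_div_cancel₀ b hC.ne'

theorem eventually_forall_le_add_one_of_tendstoUniformlyOn {ι X : Type*} {l : Filter ι}
    {s : Set X} {F : ι → X → ℝ} {F₀ : X → ℝ} {M : ℝ} (hF : TendstoUniformlyOn F F₀ l s)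
    (hM : ∀ x ∈ s, F₀ x ≤ M) : ∀ᶠ i in l, ∀ x ∈ s, F i x ≤ M + 1 := by
  filter_upwards [Metric.tendstoUniformlyOn_iff.1 hF 1 one_pos] with i hi x hx
  have h := hi x hx
  rw [Real.dist_eq] at h
  linarith [(abs_lt.1 h).1, hM x hx]

theorem integral_abs_sub_le_add {X : Type*} [MeasurableSpace X] {μ : Measure X}
    {a b c : X → ℝ} (hab : Integrable (fun x => a x - b x) μ)
    (hbc : Integrable (fun x => b x - c x) μ) :
    ∫ x, |a x - c x| ∂μ ≤ ∫ x, |a x - b x| ∂μ + ∫ x, |b x - c x| ∂μ := by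
  rw [← integral_add hab.abs hbc.abs]
  exact integral_mono_of_nonneg (.of_forall fun _ => abs_nonneg _) (hab.abs.add hbc.abs)
    (.of_forall fun x => abs_sub_le _ _ _)

theorem tendstoUniformlyOn_of_rightInvOn {ι α β : Type*} [PseudoMetricSpace α]
    [PseudoMetricSpace β] {l : Filter ι} {s : Set α} {t : Set β} {u : ι → α → β}
    {u₀ : α → β} {v : ι → β → α} {v₀ : β → α} {δ : ℝ} (hδ : 0 < δ)
    (hu₀ : ∀ a ∈ s, ∀ b ∈ s, δ * dist a b ≤ dist (u₀ a) (u₀ b))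
    (hu : TendstoUniformlyOn u u₀ l s) (hv : ∀ i, MapsTo (v i) t s) (hv₀ : MapsTo v₀ t s)
    (hinv : ∀ i, RightInvOn (v i) (u i) t) (hinv₀ : RightInvOn v₀ u₀ t) :
    TendstoUniformlyOn v v₀ l t := by
  refine Metric.tendstoUniformlyOn_iff.2 fun ε hε => ?_
  filter_upwards [Metric.tendstoUniformlyOn_iff.1 hu (δ * ε) (mul_pos hδ hε)] with i hi x hx
  refine lt_of_mul_lt_mul_left ?_ hδ.le
  calc δ * dist (v₀ x) (v i x) ≤ dist (u₀ (v₀ x)) (u₀ (v i x)) :=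
        hu₀ _ (hv₀ hx) _ (hv i hx)
    _ = dist (u₀ (v i x)) (u i (v i x)) := by rw [hinv₀ hx, hinv i hx, dist_comm]
    _ < δ * ε := hi _ (hv i hx)

theorem tendsto_setIntegral_mul_abs_inv_mul_sub {ι X : Type*} [MeasurableSpace X]
    {μ : Measure X} {l : Filter ι} {s : Set X} (hs : MeasurableSet s) {D F : ι → X → ℝ}
    {D₀ F₀ : X → ℝ} (hD : ∀ i, ∀ x ∈ s, 0 < D i x) (hD₀ : ∀ x ∈ s, D₀ x ≠ 0)
    (hDconv : TendstoUniformlyOn D D₀ l s) (hF : ∀ i, IntegrableOn (F i) s μ)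
    (hF₀ : IntegrableOn F₀ s μ) (hh₀ : IntegrableOn (fun x => (D₀ x)⁻¹ * F₀ x) s μ)
    (hL1 : Tendsto (fun i => ∫ x in s, |F i x - F₀ x| ∂μ) l (𝓝 0)) :
    Tendsto (fun i => ∫ x in s, D i x * |(D i x)⁻¹ * F i x - (D₀ x)⁻¹ * F₀ x| ∂μ) l (𝓝 0) := by
  set K := ∫ x in s, |(D₀ x)⁻¹ * F₀ x| ∂μ
  refine tendsto_nhds_zero_of_forall_eventually_le_mul (1 + K)
    (fun i => setIntegral_nonneg hs fun x hx => mul_nonneg (hD i x hx).le (abs_nonneg _))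
    fun ε hε => ?_
  filter_upwards [Metric.tendstoUniformlyOn_iff.1 hDconv ε hε,
    (hL1.eventually_lt_const hε)] with i hDi hFi
  have hdiff : IntegrableOn (fun x => |F i x - F₀ x|) s μ := ((hF i).sub hF₀).abs
  calc ∫ x in s, D i x * |(D i x)⁻¹ * F i x - (D₀ x)⁻¹ * F₀ x| ∂μ
      ≤ ∫ x in s, (|F i x - F₀ x| + ε * |(D₀ x)⁻¹ * F₀ x|) ∂μ := by
        refine integral_mono_of_nonneg
          (ae_restrict_of_forall_mem hs fun x hx => mul_nonneg (hD i x hx).le (abs_nonneg _))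
          (hdiff.add (hh₀.abs.const_mul ε)) (ae_restrict_of_forall_mem hs fun x hx => ?_)
        have hDx := hD i x hx
        have hdist : |D₀ x - D i x| ≤ ε := by
          rw [← Real.dist_eq]; exact (hDi x hx).le
        calc D i x * |(D i x)⁻¹ * F i x - (D₀ x)⁻¹ * F₀ x|
            = |D i x * ((D i x)⁻¹ * F i x - (D₀ x)⁻¹ * F₀ x)| := by
              rw [abs_mul, abs_of_pos hDx]
          _ = |(F i x - F₀ x) + (D₀ x - D i x) * ((D₀ x)⁻¹ * F₀ x)| := by
              congr 1
              field_simp [hD₀ x hx]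
              ring
          _ ≤ |F i x - F₀ x| + ε * |(D₀ x)⁻¹ * F₀ x| := by
              refine (abs_add_le _ _).trans (add_le_add le_rfl ?_)
              rw [abs_mul]
              exact mul_le_mul_of_nonneg_right hdist (abs_nonneg _)
    _ = ∫ x in s, |F i x - F₀ x| ∂μ + ε * K := by
        rw [integral_add hdiff (hh₀.abs.const_mul ε), MeasureTheory.integral_const_mul]
    _ ≤ (1 + K) * ε := by linarith

namespace IsDiffeo1

variable {u v : ℝ → ℝ}

theorem hasDerivWithinAt (hu : IsDiffeo1 u) {x : ℝ} (hx : x ∈ Icc (0:ℝ) 1) :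
    HasDerivWithinAt u (derivWithin u (Icc 0 1) x) (Icc 0 1) x :=
  (hu.1.differentiableOn one_ne_zero x hx).hasDerivWithinAt

theorem continuousOn_derivWithin (hu : IsDiffeo1 u) :
    ContinuousOn (derivWithin u (Icc 0 1)) (Icc 0 1) :=
  hu.1.continuousOn_derivWithin (uniqueDiffOn_Icc zero_lt_one) le_rfl

theorem strictMonoOn (hu : IsDiffeo1 u) : StrictMonoOn u (Icc 0 1) :=
  strictMonoOn_of_hasDerivWithinAt_pos (convex_Icc 0 1) hu.1.continuousOn
    (fun _ hx => (hu.hasDerivWithinAt (interior_subset hx)).mono interior_subset)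
    (fun x hx => hu.2.2.2 x (interior_subset hx))

theorem surjOn (hu : IsDiffeo1 u) : SurjOn u (Icc 0 1) (Icc 0 1) := by
  have h := intermediate_value_Icc zero_le_one hu.1.continuousOn
  rwa [hu.2.1, hu.2.2.1] at h

theorem image_Icc (hu : IsDiffeo1 u) : u '' Icc 0 1 = Icc 0 1 := by
  refine Subset.antisymm ?_ hu.surjOn
  rintro _ ⟨x, hx, rfl⟩
  have hmono := hu.strictMonoOn.monotoneOn
  constructor
  · simpa only [hu.2.1] using hmono (left_mem_Icc.2 zero_le_one) hx hx.1
  · simpa only [hu.2.2.1] using hmono hx (right_mem_Icc.2 zero_le_one) hx.2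

theorem integrableOn_inv_derivWithin_mul (hu : IsDiffeo1 u) {F : ℝ → ℝ}
    (hF : IntegrableOn F (Icc 0 1)) :
    IntegrableOn (fun x => (derivWithin u (Icc 0 1) x)⁻¹ * F x) (Icc 0 1) :=
  hF.continuousOn_mul (hu.continuousOn_derivWithin.inv₀ fun x hx => (hu.2.2.2 x hx).ne')
    isCompact_Icc

theorem exists_pos_le_derivWithin (hu : IsDiffeo1 u) :
    ∃ δ > 0, ∀ x ∈ Icc (0:ℝ) 1, δ ≤ derivWithin u (Icc 0 1) x := by
  obtain ⟨x₀, hx₀, hmin⟩ := isCompact_Icc.exists_isMinOn (nonempty_Icc.2 zero_le_one)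
    hu.continuousOn_derivWithin
  exact ⟨_, hu.2.2.2 x₀ hx₀, hmin⟩

theorem mul_dist_le_dist (hu : IsDiffeo1 u) {δ : ℝ}
    (hδ : ∀ x ∈ Icc (0:ℝ) 1, δ ≤ derivWithin u (Icc 0 1) x) {a b : ℝ}
    (ha : a ∈ Icc (0:ℝ) 1) (hb : b ∈ Icc (0:ℝ) 1) : δ * dist a b ≤ dist (u a) (u b) := by
  wlog hab : b ≤ a generalizing a b
  · rw [dist_comm a, dist_comm (u a)]
    exact this hb ha (le_of_not_ge hab)
  have hgrowth := (convex_Icc (0:ℝ) 1).mul_sub_le_image_sub_of_le_deriv hu.1.continuousOn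
    ((hu.1.differentiableOn one_ne_zero).mono interior_subset) (C := δ) (fun x hx => ?_)
    b hb a ha hab
  · rw [Real.dist_eq, Real.dist_eq, abs_of_nonneg (sub_nonneg.2 hab)]
    exact hgrowth.trans (le_abs_self _)
  · rw [interior_Icc] at hx
    rw [← derivWithin_of_mem_nhds (Icc_mem_nhds hx.1 hx.2)]
    exact hδ x (Ioo_subset_Icc_self hx)

theorem setIntegral_comp_leftInvOn (hu : IsDiffeo1 u) (hv : LeftInvOn v u (Icc 0 1))
    (G : ℝ → ℝ) :
    ∫ x in Icc (0:ℝ) 1, G (v x) = ∫ y in Icc (0:ℝ) 1, derivWithin u (Icc 0 1) y * G y := by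
  conv_lhs => rw [← hu.image_Icc]
  rw [integral_image_eq_integral_abs_deriv_smul measurableSet_Icc
    (fun _ hx => hu.hasDerivWithinAt hx) hu.strictMonoOn.injOn]
  refine setIntegral_congr_fun measurableSet_Icc fun y hy => ?_
  rw [smul_eq_mul, abs_of_pos (hu.2.2.2 y hy), hv hy]

theorem integrableOn_comp_leftInvOn (hu : IsDiffeo1 u) (hv : LeftInvOn v u (Icc 0 1))
    {G : ℝ → ℝ} (hG : IntegrableOn G (Icc 0 1)) :
    IntegrableOn (fun x => G (v x)) (Icc 0 1) := by
  rw [← hu.image_Icc, integrableOn_image_iff_integrableOn_abs_deriv_smul measurableSet_Icc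
    (fun _ hx => hu.hasDerivWithinAt hx) hu.strictMonoOn.injOn]
  refine (hG.continuousOn_mul hu.continuousOn_derivWithin.abs isCompact_Icc).congr_fun
    (fun y hy => ?_) measurableSet_Icc
  rw [smul_eq_mul, hv hy]

theorem setIntegral_abs_comp_leftInvOn_le (hu : IsDiffeo1 u) (hv : LeftInvOn v u (Icc 0 1))
    {M : ℝ} (hM : ∀ x ∈ Icc (0:ℝ) 1, derivWithin u (Icc 0 1) x ≤ M) {G : ℝ → ℝ}
    (hG : IntegrableOn G (Icc 0 1)) :
    ∫ x in Icc (0:ℝ) 1, |G (v x)| ≤ M * ∫ y in Icc (0:ℝ) 1, |G y| := by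
  rw [hu.setIntegral_comp_leftInvOn hv (fun y => |G y|), ← MeasureTheory.integral_const_mul]
  exact setIntegral_mono_on
    (IntegrableOn.continuousOn_mul hu.continuousOn_derivWithin hG.abs isCompact_Icc)
    (hG.abs.const_mul M) measurableSet_Icc
    fun y hy => mul_le_mul_of_nonneg_right (hM y hy) (abs_nonneg _)

end IsDiffeo1

theorem tendsto_setIntegral_abs_comp_sub_comp {ι : Type*} {l : Filter ι} {u v : ι → ℝ → ℝ}
    {u₀ v₀ : ℝ → ℝ} {M : ℝ} (hu : ∀ i, IsDiffeo1 (u i)) (hu₀ : IsDiffeo1 u₀)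
    (hv : ∀ i, LeftInvOn (v i) (u i) (Icc 0 1)) (hv₀ : LeftInvOn v₀ u₀ (Icc 0 1))
    (hM : ∀ᶠ i in l, ∀ x ∈ Icc (0:ℝ) 1, derivWithin (u i) (Icc 0 1) x ≤ M)
    (hM₀ : ∀ x ∈ Icc (0:ℝ) 1, derivWithin u₀ (Icc 0 1) x ≤ M)
    (hconv : TendstoUniformlyOn v v₀ l (Icc 0 1)) {φ : ℝ → ℝ}
    (hφ : IntegrableOn φ (Icc 0 1)) :
    Tendsto (fun i => ∫ x in Icc (0:ℝ) 1, |φ (v i x) - φ (v₀ x)|) l (𝓝 0) := by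
  have hM_nonneg : 0 ≤ M := (hu₀.2.2.2 0 (left_mem_Icc.2 zero_le_one)).le.trans
    (hM₀ 0 (left_mem_Icc.2 zero_le_one))
  refine tendsto_nhds_zero_of_forall_eventually_le_mul (2 * M + 1)
    (fun i => integral_nonneg fun _ => abs_nonneg _) fun ε hε => ?_
  obtain ⟨g, hg_supp, hg_approx, hg_cont, -⟩ := hφ.exists_hasCompactSupport_integral_sub_le hε
  have hd : IntegrableOn (fun y => φ y - g y) (Icc 0 1) := hφ.sub hg_cont.integrableOn_Icc
  have hd_le : ∀ {w z : ℝ → ℝ}, IsDiffeo1 w → LeftInvOn z w (Icc 0 1) →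
      (∀ x ∈ Icc (0:ℝ) 1, derivWithin w (Icc 0 1) x ≤ M) →
      ∫ x in Icc (0:ℝ) 1, |φ (z x) - g (z x)| ≤ M * ε := fun hw hz hMw =>
    (hw.setIntegral_abs_comp_leftInvOn_le hz hMw hd).trans
      (mul_le_mul_of_nonneg_left hg_approx hM_nonneg)
  have hg_unif :=
    (hg_supp.uniformContinuous_of_continuous hg_cont).comp_tendstoUniformlyOn hconv
  filter_upwards [Metric.tendstoUniformlyOn_iff.1 hg_unif ε hε, hM] with i hgi hMi
  have hdi := (hu i).integrableOn_comp_leftInvOn (hv i) hd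
  have hd₀ := hu₀.integrableOn_comp_leftInvOn hv₀ hd
  calc ∫ x in Icc (0:ℝ) 1, |φ (v i x) - φ (v₀ x)|
      ≤ ∫ x in Icc (0:ℝ) 1, (|φ (v i x) - g (v i x)| + |φ (v₀ x) - g (v₀ x)| + ε) := by
        refine integral_mono_of_nonneg (.of_forall fun _ => abs_nonneg _)
          ((hdi.abs.add hd₀.abs).add (integrableOn_const (by simp)))
          (ae_restrict_of_forall_mem measurableSet_Icc fun x hx => ?_)
        have hgx := hgi x hx
        rw [Function.comp_apply, Function.comp_apply, dist_comm, Real.dist_eq] at hgx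
        calc |φ (v i x) - φ (v₀ x)|
            = |(φ (v i x) - g (v i x)) - (φ (v₀ x) - g (v₀ x)) + (g (v i x) - g (v₀ x))| := by
              ring_nf
          _ ≤ _ := (abs_add_le _ _).trans (add_le_add (abs_sub _ _) hgx.le)
    _ = (∫ x in Icc (0:ℝ) 1, |φ (v i x) - g (v i x)|)
          + (∫ x in Icc (0:ℝ) 1, |φ (v₀ x) - g (v₀ x)|) + ε := by
        rw [integral_add (f := fun x => |φ (v i x) - g (v i x)| + |φ (v₀ x) - g (v₀ x)|)
          (hdi.abs.add hd₀.abs) (integrableOn_const (by simp)), integral_add hdi.abs hd₀.abs,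
          setIntegral_const]
        simp
    _ ≤ M * ε + M * ε + ε :=
        add_le_add (add_le_add (hd_le (hu i) (hv i) hMi) (hd_le hu₀ hv₀ hM₀)) le_rfl
    _ = (2 * M + 1) * ε := by ring

theorem key_claim_L1_convergence_general
    (f : ℕ → ℝ → ℝ) (f₀ : ℝ → ℝ) (finv : ℕ → ℝ → ℝ) (f₀inv : ℝ → ℝ)
    (hf : ∀ n, IsDiffeo1 (f n)) (hf₀ : IsDiffeo1 f₀)
    (hinv : ∀ n, ∀ x ∈ Icc (0:ℝ) 1, finv n (f n x) = x ∧ f n (finv n x) = x)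
    (hinv₀ : ∀ x ∈ Icc (0:ℝ) 1, f₀inv (f₀ x) = x ∧ f₀ (f₀inv x) = x)
    (f'' : ℕ → ℝ → ℝ) (f₀'' : ℝ → ℝ)
    (hint : ∀ n, IntegrableOn (f'' n) (Icc 0 1)) (hint₀ : IntegrableOn f₀'' (Icc 0 1))
    (hconv : TendstoUniformlyOn (fun n x => f n x) f₀ atTop (Icc 0 1))
    (hconv' : TendstoUniformlyOn (fun n x => derivWithin (f n) (Icc 0 1) x)
      (derivWithin f₀ (Icc 0 1)) atTop (Icc 0 1))
    (hL1 : Tendsto (fun n => ∫ x in Icc (0:ℝ) 1, |f'' n x - f₀'' x|) atTop (𝓝 0)) :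
    Tendsto (fun n => ∫ x in Icc (0:ℝ) 1,
      |(derivWithin (f n) (Icc 0 1) (finv n x))⁻¹ * f'' n (finv n x)
        - (derivWithin f₀ (Icc 0 1) (f₀inv x))⁻¹ * f₀'' (f₀inv x)|) atTop (𝓝 0) := by
  have hleft : ∀ n, LeftInvOn (finv n) (f n) (Icc 0 1) := fun n x hx => (hinv n x hx).1
  have hleft₀ : LeftInvOn f₀inv f₀ (Icc 0 1) := fun x hx => (hinv₀ x hx).1
  have hh₀ := hf₀.integrableOn_inv_derivWithin_mul hint₀
  have hfirst : Tendsto (fun n => ∫ x in Icc (0:ℝ) 1,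
      |(derivWithin (f n) (Icc 0 1) (finv n x))⁻¹ * f'' n (finv n x)
        - (derivWithin f₀ (Icc 0 1) (finv n x))⁻¹ * f₀'' (finv n x)|) atTop (𝓝 0) :=
    (tendsto_setIntegral_mul_abs_inv_mul_sub measurableSet_Icc (fun n => (hf n).2.2.2)
      (fun x hx => (hf₀.2.2.2 x hx).ne') hconv' hint hint₀ hh₀ hL1).congr fun n =>
        ((hf n).setIntegral_comp_leftInvOn (hleft n) _).symm
  obtain ⟨δ, hδ, hδle⟩ := hf₀.exists_pos_le_derivWithin
  have hinvconv : TendstoUniformlyOn finv f₀inv atTop (Icc 0 1) :=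
    tendstoUniformlyOn_of_rightInvOn hδ (fun a ha b hb => hf₀.mul_dist_le_dist hδle ha hb)
      hconv (fun n => (hleft n).mapsTo (hf n).surjOn) (hleft₀.mapsTo hf₀.surjOn)
      (fun n x hx => (hinv n x hx).2) (fun x hx => (hinv₀ x hx).2)
  obtain ⟨M, hM⟩ := isCompact_Icc.bddAbove_image hf₀.continuousOn_derivWithin
  have hM₀ : ∀ x ∈ Icc (0:ℝ) 1, derivWithin f₀ (Icc 0 1) x ≤ M := fun x hx => hM ⟨x, hx, rfl⟩
  have hsecond := tendsto_setIntegral_abs_comp_sub_comp hf hf₀ hleft hleft₀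
    (eventually_forall_le_add_one_of_tendstoUniformlyOn hconv' hM₀)
    (fun x hx => by linarith [hM₀ x hx]) hinvconv hh₀
  refine squeeze_zero (fun n => integral_nonneg fun _ => abs_nonneg _) (fun n => ?_)
    (by simpa only [add_zero] using hfirst.add hsecond)
  have hh₀n := (hf n).integrableOn_comp_leftInvOn (hleft n) hh₀
  exact integral_abs_sub_le_add
    (((hf n).integrableOn_comp_leftInvOn (hleft n)
      ((hf n).integrableOn_inv_derivWithin_mul (hint n))).sub hh₀n)
    (hh₀n.sub (hf₀.integrableOn_comp_leftInvOn hleft₀ hh₀))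

/-- If `fₙ → f₀`, `fₙ' → f₀'` uniformly and `fₙ'' → f₀''` in `L¹` (where `fₙ''` is the
a.e. derivative of the absolutely continuous `fₙ'`), then
`[(fₙ')⁻¹·fₙ''] ∘ fₙ⁻¹ → [(f₀')⁻¹·f₀''] ∘ f₀⁻¹` in `L¹([0,1])`. -/
theorem key_claim_L1_convergence
    (f : ℕ → ℝ → ℝ) (f₀ : ℝ → ℝ) (finv : ℕ → ℝ → ℝ) (f₀inv : ℝ → ℝ)
    (hf : ∀ n, IsDiffeo1 (f n)) (hf₀ : IsDiffeo1 f₀)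
    (hinv : ∀ n, ∀ x ∈ Icc (0:ℝ) 1, finv n (f n x) = x ∧ f n (finv n x) = x)
    (hinv₀ : ∀ x ∈ Icc (0:ℝ) 1, f₀inv (f₀ x) = x ∧ f₀ (f₀inv x) = x)
    (f'' : ℕ → ℝ → ℝ) (f₀'' : ℝ → ℝ)
    (hint : ∀ n, IntegrableOn (f'' n) (Icc 0 1)) (hint₀ : IntegrableOn f₀'' (Icc 0 1))
    (hac : ∀ n, ∀ x ∈ Icc (0:ℝ) 1, derivWithin (f n) (Icc 0 1) x
      = derivWithin (f n) (Icc 0 1) 0 + ∫ t in (0:ℝ)..x, f'' n t)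
    (hac₀ : ∀ x ∈ Icc (0:ℝ) 1, derivWithin f₀ (Icc 0 1) x
      = derivWithin f₀ (Icc 0 1) 0 + ∫ t in (0:ℝ)..x, f₀'' t)
    (hconv : TendstoUniformlyOn (fun n x => f n x) f₀ atTop (Icc 0 1))
    (hconv' : TendstoUniformlyOn (fun n x => derivWithin (f n) (Icc 0 1) x)
      (derivWithin f₀ (Icc 0 1)) atTop (Icc 0 1))
    (hL1 : Tendsto (fun n => ∫ x in Icc (0:ℝ) 1, |f'' n x - f₀'' x|) atTop (𝓝 0)) :
    Tendsto (fun n => ∫ x in Icc (0:ℝ) 1,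
      |(derivWithin (f n) (Icc 0 1) (finv n x))⁻¹ * f'' n (finv n x)
        - (derivWithin f₀ (Icc 0 1) (f₀inv x))⁻¹ * f₀'' (f₀inv x)|) atTop (𝓝 0) :=
  key_claim_L1_convergence_general f f₀ finv f₀inv hf hf₀ hinv hinv₀ f'' f₀'' hint hint₀ hconv
    hconv' hL1
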